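/- Let γ ∈ (0,1), r > 0, and let p : ℕ → (0,∞) be a probability mass function such that Σ_{n≥0} p_n·|log p_n| < ∞, Σ_{n≥0} p_{n+1}·|log p_n| < ∞ and Σ_{n≥0} p_n·|log p_{n+1}| < ∞. Then Σ_{n≥0} L^c_{r,γ}[p]_n·log p_n = −(1−γ)·Σ_{n≥0} ( p_{n+1} − r·p_n/(1−γ) )·log( p_{n+1}/( r·p_n/(1−γ) ) ) + ( r − (1−γ)·r_c )·log( r/(1−γ) ), where r_c = Σ_{n≥1} p_n = 1 − p_0. -/
import Mathlib


/-- The mean-field operator for probabilistic cheaters. -/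
noncomputable def Lc (γ r : ℝ) (p : ℕ → ℝ) : ℕ → ℝ
  | 0 => (1 - γ) * p 1 - r * p 0
  | n + 1 => (1 - γ) * p (n + 2) + r * p n - (1 - γ) * p (n + 1) - r * p (n + 1)

/-- entropy-production identity for the probabilistic-cheater operator. -/
theorem stmt_9 (γ r : ℝ) (hγ : γ ∈ Set.Ioo (0 : ℝ) 1) (hr : 0 < r)
    (p : ℕ → ℝ) (hp0 : ∀ n, 0 < p n) (hp1 : (∑' n, p n) = 1)
    (h1 : Summable (fun n : ℕ => p n * |Real.log (p n)|))
    (h2 : Summable (fun n : ℕ => p (n + 1) * |Real.log (p n)|))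
    (h3 : Summable (fun n : ℕ => p n * |Real.log (p (n + 1))|)) :
    (∑' n, Lc γ r p n * Real.log (p n)) =
      -(1 - γ) *
          (∑' n, (p (n + 1) - r * p n / (1 - γ)) * Real.log (p (n + 1) / (r * p n / (1 - γ)))) +
        (r - (1 - γ) * (1 - p 0)) * Real.log (r / (1 - γ)) := by
  obtain ⟨hγ0, hγ1⟩ := hγ
  have hc0 : (0:ℝ) < 1 - γ := by linarith
  set c : ℝ := 1 - γ with hc
  have hcne : c ≠ 0 := ne_of_gt hc0
  have hrne : r ≠ 0 := ne_of_gt hr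
  have hpne : ∀ n, p n ≠ 0 := fun n => ne_of_gt (hp0 n)
  have hps : Summable p := by
    by_contra h
    rw [tsum_eq_zero_of_not_summable h] at hp1
    norm_num at hp1
  set f : ℕ → ℝ := fun n => c * p (n + 1) - r * p n with hf
  set F : ℕ → ℝ := fun n => f n * Real.log (p n) with hF
  set G : ℕ → ℝ := fun n => f n * Real.log (p (n + 1)) with hG
  set L : ℝ := Real.log (r / c) with hL
  have conv : ∀ (a b : ℕ → ℕ), Summable (fun n => p (a n) * |Real.log (p (b n))|) →
      Summable (fun n => p (a n) * Real.log (p (b n))) := by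
    intro a b h
    apply Summable.of_abs
    have he : (fun n => |p (a n) * Real.log (p (b n))|)
        = fun n => p (a n) * |Real.log (p (b n))| := by
      funext n; rw [abs_mul, abs_of_pos (hp0 _)]
    rw [he]; exact h
  have s1 : Summable (fun n => p n * Real.log (p n)) := conv id id h1
  have s2 : Summable (fun n => p (n+1) * Real.log (p n)) := conv (· + 1) id h2
  have s3 : Summable (fun n => p n * Real.log (p (n+1))) := conv id (· + 1) h3
  have h1' : Summable (fun n => p (n+1) * |Real.log (p (n+1))|) :=
    (summable_nat_add_iff 1).mpr h1
  have s4 : Summable (fun n => p (n+1) * Real.log (p (n+1))) := conv (· + 1) (· + 1) h1'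
  have sF : Summable F := by
    have h := (s2.mul_left c).sub (s1.mul_left r)
    exact h.congr fun n => by simp only [hF, hf]; ring
  have sG : Summable G := by
    have h := (s4.mul_left c).sub (s3.mul_left r)
    exact h.congr fun n => by simp only [hG, hf]; ring
  have hps' : Summable (fun n => p (n+1)) := (summable_nat_add_iff 1).mpr hps
  have sf : Summable f := by
    have h := (hps'.mul_left c).sub (hps.mul_left r)
    exact h.congr fun n => by simp only [hf]
  have sg : Summable (fun n => F n - G n) := sF.sub sG
  have hshift : (∑' n, p (n + 1)) = 1 - p 0 := by
    have h := Summable.tsum_eq_zero_add hps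
    rw [hp1] at h
    linarith
  have hsumf : (∑' n, f n) = c * (1 - p 0) - r := by
    simp only [hf]
    rw [Summable.tsum_sub (hps'.mul_left c) (hps.mul_left r), tsum_mul_left, tsum_mul_left,
      hshift, hp1]
    ring
  have hLrec : ∀ n, Lc γ r p (n+1) * Real.log (p (n+1)) = F (n+1) - G n := by
    intro n
    simp only [hF, hG, hf, Lc, hc]
    ring
  have sLc : Summable (fun n => Lc γ r p n * Real.log (p n)) := by
    apply (summable_nat_add_iff 1).mp
    exact (((summable_nat_add_iff 1).mpr sF).sub sG).congr fun n => (hLrec n).symm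
  have hFshift : (∑' n, F (n+1)) = (∑' n, F n) - F 0 := by
    have h := Summable.tsum_eq_zero_add sF
    linarith
  have hLHS : (∑' n, Lc γ r p n * Real.log (p n)) = (∑' n, F n) - (∑' n, G n) := by
    rw [Summable.tsum_eq_zero_add sLc]
    have h0 : Lc γ r p 0 * Real.log (p 0) = F 0 := by
      simp only [hF, hf, Lc, hc]
    have hrest : (∑' n, Lc γ r p (n+1) * Real.log (p (n+1)))
        = (∑' n, F n) - F 0 - (∑' n, G n) := by
      calc (∑' n, Lc γ r p (n+1) * Real.log (p (n+1))) = ∑' n, (F (n+1) - G n) :=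
            tsum_congr hLrec
        _ = (∑' n, F (n+1)) - ∑' n, G n :=
            Summable.tsum_sub ((summable_nat_add_iff 1).mpr sF) sG
        _ = (∑' n, F n) - F 0 - (∑' n, G n) := by rw [hFshift]
    rw [h0, hrest]; ring
  have hterm : ∀ n, (p (n+1) - r * p n / c) * Real.log (p (n+1) / (r * p n / c))
      = c⁻¹ * (-(F n - G n) - L * f n) := by
    intro n
    have h1n : (0:ℝ) < r * p n / c := div_pos (mul_pos hr (hp0 n)) hc0
    rw [Real.log_div (hpne _) (ne_of_gt h1n),
        Real.log_div (mul_ne_zero hrne (hpne n)) hcne,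
        Real.log_mul hrne (hpne n), hL, Real.log_div hrne hcne]
    simp only [hF, hG, hf]
    field_simp
    ring
  have hRHSsum : (∑' n, (p (n+1) - r * p n / c) * Real.log (p (n+1) / (r * p n / c)))
      = c⁻¹ * (-((∑' n, F n) - ∑' n, G n) - L * (c * (1 - p 0) - r)) := by
    rw [tsum_congr hterm, tsum_mul_left]
    congr 1
    rw [Summable.tsum_sub sg.neg (sf.mul_left L), tsum_neg,
      Summable.tsum_sub sF sG, tsum_mul_left, hsumf]
  rw [hLHS, hRHSsum]
  field_simp
  ring
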